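/- arXiv:1904.02759 — 4 statements merged into one kernel-verified Lean document; each statement's English description precedes it below -/
import Mathlib

section
/- Let K ⊂ ℝ² be a compact connected set with Minkowski perimeter P(K) := lim_{ε→0} (|K^ε| − |K|)/ε, where K^ε is the ε-neighborhood of K. Then the diameter of K satisfies D(K) ≤ P(K)/2. -/
/-! Fix `a ≠ b` in `K` and slice the plane by the lines orthogonal to `u = b - a`. As `K` is
connected, its projection onto `ℝ u` contains a segment of length `‖b - a‖`, so at least that
much of the lines meet `K`. On each line meeting `K`, the `ε`-neighbourhood gains length `2ε`
beyond the extreme points of the slice. Fubini gives `|K^ε| ≥ |K| + 2ε ‖b - a‖`, hence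
`P(K) ≥ 2 ‖b - a‖`. -/

open MeasureTheory Metric Set
open scoped RealInnerProductSpace

theorem Real.volume_add_le_volume_cthickening {A : Set ℝ} (hA : IsCompact A)
    (hne : A.Nonempty) {ε : ℝ} (hε : 0 ≤ ε) :
    volume A + ENNReal.ofReal (2 * ε) ≤ volume (cthickening ε A) := by
  set m := sInf A
  set M := sSup A
  have hm : m ∈ A := hA.sInf_mem hne
  have hM : M ∈ A := hA.sSup_mem hne
  have hA_sub : A ⊆ Icc m M := fun y hy =>
    ⟨csInf_le hA.bddBelow hy, le_csSup hA.bddAbove hy⟩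
  have hcaps : Disjoint (Ico (m - ε) m) (Ioc M (M + ε)) :=
    disjoint_left.2 fun y hy hy' => by linarith [hy.2, hy'.1, (hA_sub hM).1]
  have hA_caps : Disjoint A (Ico (m - ε) m ∪ Ioc M (M + ε)) :=
    disjoint_left.2 fun y hy hy' => by
      rcases hy' with hy' | hy' <;> linarith [hy'.1, hy'.2, (hA_sub hy).1, (hA_sub hy).2]
  calc volume A + ENNReal.ofReal (2 * ε)
      = volume (A ∪ (Ico (m - ε) m ∪ Ioc M (M + ε))) := by
        rw [measure_union hA_caps (measurableSet_Ico.union measurableSet_Ioc),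
          measure_union hcaps measurableSet_Ioc, Real.volume_Ico, Real.volume_Ioc,
          sub_sub_cancel, add_sub_cancel_left, ← ENNReal.ofReal_add hε hε, two_mul]
    _ ≤ volume (cthickening ε A) := by
        refine measure_mono (union_subset (self_subset_cthickening A) (union_subset ?_ ?_))
        · refine Subset.trans ?_ (closedBall_subset_cthickening hm ε)
          rw [Real.closedBall_eq_Icc]
          exact Ico_subset_Icc_self.trans (Icc_subset_Icc_right (by linarith))
        · refine Subset.trans ?_ (closedBall_subset_cthickening hM ε)
          rw [Real.closedBall_eq_Icc]
          exact Ioc_subset_Icc_self.trans (Icc_subset_Icc_left (by linarith))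

theorem IsCompact.preimage_prodMk {α β : Type*} [TopologicalSpace α] [TopologicalSpace β]
    [T2Space α] [T2Space β] {A : Set (α × β)} (hA : IsCompact A) (a : α) :
    IsCompact (Prod.mk a ⁻¹' A) :=
  (hA.image continuous_snd).of_isClosed_subset
    (hA.isClosed.preimage (Continuous.prodMk_right a)) fun b hb => ⟨(a, b), hb, rfl⟩

theorem volume_add_mul_volume_fst_image_le {A S : Set (ℝ × ℝ)} (hA : IsCompact A)
    (hS : MeasurableSet S) {ε : ℝ} (hε : 0 ≤ ε)
    (hAS : ∀ p ∈ A, ∀ y, dist y p.2 ≤ ε → (p.1, y) ∈ S) :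
    volume A + ENNReal.ofReal (2 * ε) * volume (Prod.fst '' A) ≤ volume S := by
  have hslice (t : ℝ) : cthickening ε (Prod.mk t ⁻¹' A) ⊆ Prod.mk t ⁻¹' S := by
    rw [(hA.preimage_prodMk t).cthickening_eq_biUnion_closedBall hε]
    exact iUnion₂_subset fun y hy z hz => hAS (t, y) hy z hz
  have hslice_vol (t : ℝ) : volume (Prod.mk t ⁻¹' A)
      + (Prod.fst '' A).indicator (fun _ => ENNReal.ofReal (2 * ε)) t
        ≤ volume (Prod.mk t ⁻¹' S) := by
    by_cases ht : t ∈ Prod.fst '' A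
    · obtain ⟨p, hp, rfl⟩ := ht
      rw [indicator_of_mem (mem_image_of_mem _ hp)]
      exact (Real.volume_add_le_volume_cthickening (hA.preimage_prodMk p.1)
        ⟨p.2, hp⟩ hε).trans (measure_mono (hslice p.1))
    · rw [indicator_of_notMem ht, add_zero]
      exact measure_mono ((self_subset_cthickening _).trans (hslice t))
  have hAm : MeasurableSet A := hA.isClosed.measurableSet
  calc volume A + ENNReal.ofReal (2 * ε) * volume (Prod.fst '' A)
      = ∫⁻ t, volume (Prod.mk t ⁻¹' A)
          + (Prod.fst '' A).indicator (fun _ => ENNReal.ofReal (2 * ε)) t := by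
        rw [lintegral_add_left (measurable_measure_prodMk_left hAm),
          lintegral_indicator_const (hA.image continuous_fst).measurableSet,
          Measure.volume_eq_prod, Measure.prod_apply hAm]
    _ ≤ ∫⁻ t, volume (Prod.mk t ⁻¹' S) := lintegral_mono hslice_vol
    _ = volume S := by rw [Measure.volume_eq_prod, Measure.prod_apply hS]

section Plane

variable {F : Type*} [NormedAddCommGroup F] [InnerProductSpace ℝ F]

theorem exists_orthonormalBasis_fin_two_apply_zero [FiniteDimensional ℝ F]
    (hF : Module.finrank ℝ F = 2) {u : F} (hu : ‖u‖ = 1) :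
    ∃ B : OrthonormalBasis (Fin 2) ℝ F, B 0 = u := by
  obtain ⟨B, hB⟩ := Orthonormal.exists_orthonormalBasis_extension_of_card_eq (𝕜 := ℝ)
    (ι := Fin 2) (v := fun _ => u) (s := {0}) (by simpa using hF) (by simp [hu])
  exact ⟨B, hB 0 rfl⟩

variable [MeasurableSpace F] [BorelSpace F]

namespace OrthonormalBasis

noncomputable def finTwoCoords (B : OrthonormalBasis (Fin 2) ℝ F) : F ≃ᵐ ℝ × ℝ :=
  B.measurableEquiv.trans ((MeasurableEquiv.toLp 2 (Fin 2 → ℝ)).symm.trans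
    MeasurableEquiv.finTwoArrow)

variable (B : OrthonormalBasis (Fin 2) ℝ F)

theorem finTwoCoords_apply (x : F) : B.finTwoCoords x = (⟪B 0, x⟫, ⟪B 1, x⟫) := by
  simp [finTwoCoords, measurableEquiv, MeasurableEquiv.finTwoArrow, B.repr_apply_apply]

theorem continuous_finTwoCoords : Continuous B.finTwoCoords := by
  simp_rw [funext B.finTwoCoords_apply]
  fun_prop

variable [FiniteDimensional ℝ F]

theorem measurePreserving_finTwoCoords : MeasurePreserving B.finTwoCoords :=
  ((volume_preserving_finTwoArrow ℝ).comp
    (EuclideanSpace.volume_preserving_symm_measurableEquiv_toLp (Fin 2))).comp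
    B.measurePreserving_measurableEquiv

theorem volume_add_mul_volume_image_inner_le_volume_cthickening {K : Set F} (hK : IsCompact K)
    {ε : ℝ} (hε : 0 ≤ ε) :
    volume K + ENNReal.ofReal (2 * ε) * volume ((⟪B 0, ·⟫) '' K)
      ≤ volume (cthickening ε K) := by
  set ψ := B.finTwoCoords
  have hvol (s : Set F) : volume (ψ '' s) = volume s := by
    rw [ψ.image_eq_preimage_symm, B.measurePreserving_finTwoCoords.symm.measure_preimage_equiv]
  have hfst : Prod.fst '' (ψ '' K) = (⟪B 0, ·⟫) '' K := by
    simp only [image_image, ψ, finTwoCoords_apply]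
  have hvertical : ∀ p ∈ ψ '' K, ∀ y, dist y p.2 ≤ ε → (p.1, y) ∈ ψ '' cthickening ε K := by
    rintro _ ⟨x, hx, rfl⟩ y hy
    refine ⟨x + (y - (ψ x).2) • B 1, mem_cthickening_of_dist_le _ x ε K hx ?_, ?_⟩
    · simpa [dist_eq_norm, norm_smul] using hy
    · simp [ψ, finTwoCoords_apply, inner_add_right, real_inner_smul_right, B.inner_eq_ite]
  have := volume_add_mul_volume_fst_image_le (hK.image B.continuous_finTwoCoords)
    (ψ.measurableSet_image.2 isClosed_cthickening.measurableSet) hε hvertical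
  rwa [hfst, hvol, hvol] at this

end OrthonormalBasis

variable [FiniteDimensional ℝ F]

theorem IsPreconnected.volume_add_le_volume_cthickening (hF : Module.finrank ℝ F = 2)
    {K : Set F} (hK : IsCompact K) (hKc : IsPreconnected K) {a b : F} (ha : a ∈ K) (hb : b ∈ K)
    {ε : ℝ} (hε : 0 ≤ ε) :
    volume K + ENNReal.ofReal (2 * ε * dist a b) ≤ volume (cthickening ε K) := by
  rcases eq_or_ne a b with rfl | hab
  · simpa using measure_mono (self_subset_cthickening K)
  have hd : 0 < ‖b - a‖ := norm_pos_iff.2 (sub_ne_zero.2 hab.symm)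
  obtain ⟨B, hB⟩ := exists_orthonormalBasis_fin_two_apply_zero hF
    (u := ‖b - a‖⁻¹ • (b - a)) (by simp [norm_smul, hd.ne'])
  set f : F → ℝ := (⟪B 0, ·⟫)
  have hf : f b - f a = dist a b := by
    rw [dist_comm, dist_eq_norm, show f b - f a = ⟪B 0, b⟫ - ⟪B 0, a⟫ from rfl, hB,
      real_inner_smul_left, real_inner_smul_left, ← mul_sub, ← inner_sub_right,
      real_inner_self_eq_norm_sq]
    field_simp
  have hIcc : Icc (f a) (f b) ⊆ f '' K :=
    (hKc.image f (by fun_prop)).Icc_subset ⟨a, ha, rfl⟩ ⟨b, hb, rfl⟩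
  calc volume K + ENNReal.ofReal (2 * ε * dist a b)
      = volume K + ENNReal.ofReal (2 * ε) * volume (Icc (f a) (f b)) := by
        rw [Real.volume_Icc, hf, ENNReal.ofReal_mul (by positivity)]
    _ ≤ volume K + ENNReal.ofReal (2 * ε) * volume (f '' K) := by gcongr
    _ ≤ volume (cthickening ε K) :=
        B.volume_add_mul_volume_image_inner_le_volume_cthickening hK hε

theorem IsPreconnected.two_mul_dist_le_volume_cthickening_sub_div (hF : Module.finrank ℝ F = 2)
    {K : Set F} (hK : IsCompact K) (hKc : IsPreconnected K) {a b : F} (ha : a ∈ K) (hb : b ∈ K)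
    {ε : ℝ} (hε : 0 < ε) :
    2 * dist a b ≤ ((volume (cthickening ε K)).toReal - (volume K).toReal) / ε := by
  have h := ENNReal.toReal_mono hK.isBounded.cthickening.measure_lt_top.ne
    (hKc.volume_add_le_volume_cthickening hF hK ha hb hε.le)
  rw [ENNReal.toReal_add hK.measure_lt_top.ne ENNReal.ofReal_ne_top,
    ENNReal.toReal_ofReal (by positivity)] at h
  rw [le_div_iff₀ hε]
  linarith

end Plane

/-- The diameter of a compact connected planar set is at most half of its
Minkowski perimeter (when the limit defining the Minkowski perimeter exists). -/
theorem stmt_3 (K : Set (EuclideanSpace ℝ (Fin 2)))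
    (hK : IsCompact K) (hKconn : IsConnected K) (P : ℝ)
    (hP : Filter.Tendsto
      (fun ε : ℝ => ((volume (cthickening ε K)).toReal - (volume K).toReal) / ε)
      (nhdsWithin 0 (Set.Ioi 0)) (nhds P)) :
    Metric.diam K ≤ P / 2 := by
  have hbound : ∀ a ∈ K, ∀ b ∈ K, 2 * dist a b ≤ P := fun a ha b hb =>
    ge_of_tendsto hP <| eventually_mem_nhdsWithin.mono fun ε hε =>
      hKconn.isPreconnected.two_mul_dist_le_volume_cthickening_sub_div
        finrank_euclideanSpace_fin hK ha hb hε
  obtain ⟨a, ha⟩ := hKconn.nonempty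
  refine diam_le_of_forall_dist_le ?_ fun x hx y hy => ?_
  · linarith [hbound a ha a ha, dist_nonneg (x := a) (y := a)]
  · linarith [hbound x hx y hy]
end

section
/- Let G(t) = (1/2)(1 − |t|/π)·sin|t| for t ∈ [−π, π]. Let R : ℝ → ℝ be a continuous 2π-periodic function satisfying ∫₀^{2π} R(t) sin t dt = 0 and ∫₀^{2π} R(t) cos t dt = 0. Then the function h(θ) = ∫_{−π}^{π} G(t) R(θ + t) dt is 2π-periodic, satisfies h'' + h = R, and satisfies ∫₀^{2π} h(t) sin t dt = 0 and ∫₀^{2π} h(t) cos t dt = 0. -/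
/-!
Since `|t| sin |t| = t sin t`, the kernel is `G t = (sin |t| - t sin t / π) / 2`. After the
substitution `s = θ + t`, expanding `sin (θ - s)` and using that `R` is orthogonal to
`sin (· - θ)` over every period, `h θ = sin θ * U θ - cos θ * V θ` with explicit primitives
`U, V` of `R cos` and `R sin`; variation of parameters then gives `h'' + h = R`. The orthogonality
of `h` follows from Fubini, since every translate of `R` is still orthogonal to `sin` and `cos`.
-/

open Real intervalIntegral

theorem hasDerivAt_integral_of_hasDerivAt {f u v : ℝ → ℝ} {u' v' x : ℝ} (hf : Continuous f)
    (hu : HasDerivAt u u' x) (hv : HasDerivAt v v' x) :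
    HasDerivAt (fun y => ∫ s in u y..v y, f s) (f (v x) * v' - f (u x) * u') x := by
  have hF : ∀ y, HasDerivAt (fun z => ∫ s in (0 : ℝ)..z, f s) (f y) y := fun y =>
    (hf.integral_hasStrictDerivAt 0 y).hasDerivAt
  have hdiff : (fun y => ∫ s in u y..v y, f s) =
      fun y => (∫ s in (0 : ℝ)..v y, f s) - ∫ s in (0 : ℝ)..u y, f s :=
    funext fun y => (integral_interval_sub_left (hf.intervalIntegrable _ _)
      (hf.intervalIntegrable _ _)).symm
  rw [hdiff]
  exact ((hF _).comp x hv).sub ((hF _).comp x hu)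

theorem variation_of_parameters {f U V y : ℝ → ℝ} (hU : ∀ x, HasDerivAt U (f x * cos x) x)
    (hV : ∀ x, HasDerivAt V (f x * sin x) x) (hy : ∀ x, y x = sin x * U x - cos x * V x)
    (θ : ℝ) : deriv (deriv y) θ + y θ = f θ := by
  have hy' : deriv y = fun x => cos x * U x + sin x * V x := by
    funext x
    rw [funext hy]
    refine (((hasDerivAt_sin x).mul (hU x)).sub ((hasDerivAt_cos x).mul (hV x))).deriv.trans ?_
    ring
  have hy'' : HasDerivAt (fun x => cos x * U x + sin x * V x)
      (-sin θ * U θ + cos θ * (f θ * cos θ) + (cos θ * V θ + sin θ * (f θ * sin θ))) θ :=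
    ((hasDerivAt_cos θ).mul (hU θ)).add ((hasDerivAt_sin θ).mul (hV θ))
  rw [hy', hy''.deriv, hy]
  linear_combination f θ * sin_sq_add_cos_sq θ

theorem integral_integral_comp_add_mul_eq_zero {K R φ : ℝ → ℝ} (hK : Continuous K)
    (hR : Continuous R) (hφ : Continuous φ) {a b c d : ℝ}
    (h : ∀ s, ∫ t in a..b, R (t + s) * φ t = 0) :
    ∫ t in a..b, (∫ s in c..d, K s * R (t + s)) * φ t = 0 := by
  have hF : Continuous (Function.uncurry fun t s => K s * R (t + s) * φ t) := by fun_prop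
  calc ∫ t in a..b, (∫ s in c..d, K s * R (t + s)) * φ t
      = ∫ t in a..b, ∫ s in c..d, K s * R (t + s) * φ t :=
        integral_congr fun t _ => (integral_mul_const _ _).symm
    _ = ∫ s in c..d, ∫ t in a..b, K s * R (t + s) * φ t :=
        MeasureTheory.intervalIntegral_intervalIntegral_swap
          ((hF.continuousOn.integrableOn_compact (isCompact_uIcc.prod isCompact_uIcc)).mono_set
            (Set.prod_mono Set.uIoc_subset_uIcc Set.uIoc_subset_uIcc))
    _ = 0 := by simp only [mul_assoc, integral_const_mul, h, mul_zero, integral_zero]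

theorem integral_mul_sin_add_cos_eq_zero {R : ℝ → ℝ} (hR : Continuous R)
    (hRper : Function.Periodic R (2 * π))
    (hRsin : ∫ t in (0 : ℝ)..2 * π, R t * sin t = 0)
    (hRcos : ∫ t in (0 : ℝ)..2 * π, R t * cos t = 0) (a α β : ℝ) :
    ∫ u in a..a + 2 * π, R u * (α * sin u + β * cos u) = 0 := by
  have hper : Function.Periodic (fun u => R u * (α * sin u + β * cos u)) (2 * π) := fun u => by
    simp only [hRper u, sin_add_two_pi, cos_add_two_pi]
  rw [hper.intervalIntegral_add_eq a 0, zero_add]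
  calc ∫ u in (0 : ℝ)..2 * π, R u * (α * sin u + β * cos u)
      = ∫ u in (0 : ℝ)..2 * π, (α * (R u * sin u) + β * (R u * cos u)) :=
        integral_congr fun u _ => by ring
    _ = α * (∫ u in (0 : ℝ)..2 * π, R u * sin u) + β * ∫ u in (0 : ℝ)..2 * π, R u * cos u := by
        have hs : Continuous fun u => R u * sin u := by fun_prop
        have hc : Continuous fun u => R u * cos u := by fun_prop
        rw [integral_add ((hs.intervalIntegrable _ _).const_mul α)
          ((hc.intervalIntegrable _ _).const_mul β), integral_const_mul, integral_const_mul]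
    _ = 0 := by rw [hRsin, hRcos]; ring

theorem integral_comp_add_mul_sin_add_cos_eq_zero {R : ℝ → ℝ} (hR : Continuous R)
    (hRper : Function.Periodic R (2 * π))
    (hRsin : ∫ t in (0 : ℝ)..2 * π, R t * sin t = 0)
    (hRcos : ∫ t in (0 : ℝ)..2 * π, R t * cos t = 0) (s α β : ℝ) :
    ∫ t in (0 : ℝ)..2 * π, R (t + s) * (α * sin t + β * cos t) = 0 := by
  set f : ℝ → ℝ := fun u =>
    R u * ((α * cos s + β * sin s) * sin u + (β * cos s - α * sin s) * cos u) with hf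
  calc ∫ t in (0 : ℝ)..2 * π, R (t + s) * (α * sin t + β * cos t)
      = ∫ t in (0 : ℝ)..2 * π, f (t + s) := integral_congr fun t _ => by
        simp only [hf, sin_add, cos_add]
        linear_combination (-(R (t + s) * (α * sin t + β * cos t))) * sin_sq_add_cos_sq s
    _ = ∫ u in (0 + s)..(2 * π + s), f u := integral_comp_add_right f s
    _ = 0 := by
        rw [zero_add, add_comm]
        exact integral_mul_sin_add_cos_eq_zero hR hRper hRsin hRcos s _ _

/-- For `2π`-periodic `f` this is a primitive of `f`: differentiating the second term cancels the
`f (θ - π)` coming from the first. It is the primitive that the Green integral produces. -/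
noncomputable def windowPrimitive (f : ℝ → ℝ) (θ : ℝ) : ℝ :=
  (∫ s in (θ - π)..θ, f s) + (∫ s in (θ - π)..(θ + π), s * f s) / (2 * π)

theorem hasDerivAt_windowPrimitive {f : ℝ → ℝ} (hf : Continuous f)
    (hper : Function.Periodic f (2 * π)) (θ : ℝ) :
    HasDerivAt (windowPrimitive f) (f θ) θ := by
  have hlo : HasDerivAt (fun x : ℝ => x - π) 1 θ := (hasDerivAt_id θ).sub_const π
  have hhi : HasDerivAt (fun x : ℝ => x + π) 1 θ := (hasDerivAt_id θ).add_const π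
  have hdiff := (hasDerivAt_integral_of_hasDerivAt hf hlo (hasDerivAt_id θ)).add
    ((hasDerivAt_integral_of_hasDerivAt (continuous_id.mul hf) hlo hhi).div_const (2 * π))
  refine hdiff.congr_deriv ?_
  have hshift : f (θ + π) = f (θ - π) := by
    simpa [show θ - π + 2 * π = θ + π by ring] using hper (θ - π)
  simp only [id, Pi.mul_apply, hshift]
  field_simp
  ring

theorem sin_mul_windowPrimitive_sub_cos_mul_windowPrimitive {R : ℝ → ℝ} (hR : Continuous R)
    (θ : ℝ) :
    sin θ * windowPrimitive (fun s => R s * cos s) θ -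
        cos θ * windowPrimitive (fun s => R s * sin s) θ =
      (∫ s in (θ - π)..θ, sin (θ - s) * R s) +
        (∫ s in (θ - π)..(θ + π), s * (sin (θ - s) * R s)) / (2 * π) := by
  have hexpand : ∀ (w : ℝ → ℝ), Continuous w → ∀ a b : ℝ,
      ∫ s in a..b, w s * (sin (θ - s) * R s) =
        sin θ * (∫ s in a..b, w s * (R s * cos s)) - cos θ * ∫ s in a..b, w s * (R s * sin s) := by
    intro w hw a b
    have hc : Continuous fun s => w s * (R s * cos s) := by fun_prop
    have hs : Continuous fun s => w s * (R s * sin s) := by fun_prop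
    rw [← integral_const_mul, ← integral_const_mul, ← integral_sub
      ((hc.intervalIntegrable _ _).const_mul _) ((hs.intervalIntegrable _ _).const_mul _)]
    exact integral_congr fun s _ => by simp only [sin_sub]; ring
  have h₁ := hexpand (fun _ => 1) continuous_const (θ - π) θ
  have h₂ := hexpand id continuous_id (θ - π) (θ + π)
  simp only [one_mul, id] at h₁ h₂
  rw [h₁, h₂, windowPrimitive, windowPrimitive]
  ring

noncomputable def greenKernel (t : ℝ) : ℝ := (1 / 2) * (1 - |t| / π) * sin |t|

theorem continuous_greenKernel : Continuous greenKernel := by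
  unfold greenKernel
  fun_prop

theorem greenKernel_eq (t : ℝ) : greenKernel t = (sin |t| - t * sin t / π) / 2 := by
  rcases abs_cases t with ⟨h, -⟩ | ⟨h, -⟩ <;> simp only [greenKernel, h, sin_neg] <;> ring

theorem integral_sin_abs_sub_mul {R : ℝ → ℝ} (hR : Continuous R) {a b θ : ℝ} (ha : a ≤ θ)
    (hb : θ ≤ b) :
    ∫ s in a..b, sin |θ - s| * R s =
      (∫ s in a..θ, sin (θ - s) * R s) - ∫ s in θ..b, sin (θ - s) * R s := by
  have hc : Continuous fun s => sin |θ - s| * R s := by fun_prop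
  rw [← integral_add_adjacent_intervals (hc.intervalIntegrable a θ) (hc.intervalIntegrable θ b),
    sub_eq_add_neg, ← integral_neg]
  congr 1
  · refine integral_congr fun s hs => ?_
    rw [Set.uIcc_of_le ha] at hs
    rw [abs_of_nonneg (sub_nonneg.2 hs.2)]
  · refine integral_congr fun s hs => ?_
    rw [Set.uIcc_of_le hb] at hs
    rw [abs_of_nonpos (sub_nonpos.2 hs.1), neg_sub, ← neg_sub θ s, sin_neg, neg_mul]

theorem integral_greenKernel_mul_eq {R : ℝ → ℝ} (hR : Continuous R)
    (hRper : Function.Periodic R (2 * π))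
    (hRsin : ∫ t in (0 : ℝ)..2 * π, R t * sin t = 0)
    (hRcos : ∫ t in (0 : ℝ)..2 * π, R t * cos t = 0) (θ : ℝ) :
    ∫ t in (-π)..π, greenKernel t * R (θ + t) =
      (∫ s in (θ - π)..θ, sin (θ - s) * R s) +
        (∫ s in (θ - π)..(θ + π), s * (sin (θ - s) * R s)) / (2 * π) := by
  set k : ℝ → ℝ := fun s => sin (θ - s) * R s with hk
  have hkc : Continuous k := by fun_prop
  have hk0 : ∫ s in (θ - π)..(θ + π), k s = 0 := by
    have := integral_mul_sin_add_cos_eq_zero hR hRper hRsin hRcos (θ - π) (-cos θ) (sin θ)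
    rw [show θ - π + 2 * π = θ + π by ring] at this
    rw [← this]
    exact integral_congr fun s _ => by simp only [hk, sin_sub]; ring
  have habs : ∫ s in (θ - π)..(θ + π), sin |θ - s| * R s = 2 * ∫ s in (θ - π)..θ, k s := by
    have hsplit : (∫ s in (θ - π)..θ, k s) + ∫ s in θ..(θ + π), k s = 0 := by
      rw [integral_add_adjacent_intervals (hkc.intervalIntegrable _ _)
        (hkc.intervalIntegrable _ _), hk0]
    rw [integral_sin_abs_sub_mul hR (by linarith [pi_pos]) (by linarith [pi_pos])]
    linarith
  have hkernel : ∀ s, greenKernel (s - θ) * R s =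
      sin |θ - s| * R s / 2 + s * k s / (2 * π) - θ * k s / (2 * π) := fun s => by
    rw [greenKernel_eq, abs_sub_comm, ← neg_sub θ s, sin_neg]
    field_simp
    ring
  have hc₁ : Continuous fun s => sin |θ - s| * R s / 2 := by fun_prop
  have hc₂ : Continuous fun s => s * k s / (2 * π) := by fun_prop
  have hc₃ : Continuous fun s => θ * k s / (2 * π) := by fun_prop
  calc ∫ t in (-π)..π, greenKernel t * R (θ + t)
      = ∫ s in (θ - π)..(θ + π), greenKernel (s - θ) * R s := by
        simpa [sub_eq_add_neg] using integral_comp_add_left (fun s => greenKernel (s - θ) * R s) θ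
    _ = ∫ s in (θ - π)..(θ + π),
          (sin |θ - s| * R s / 2 + s * k s / (2 * π) - θ * k s / (2 * π)) :=
        integral_congr fun s _ => hkernel s
    _ = (∫ s in (θ - π)..(θ + π), sin |θ - s| * R s) / 2 +
          (∫ s in (θ - π)..(θ + π), s * k s) / (2 * π) -
          θ * (∫ s in (θ - π)..(θ + π), k s) / (2 * π) := by
        rw [integral_sub ((hc₁.intervalIntegrable _ _).add (hc₂.intervalIntegrable _ _))
          (hc₃.intervalIntegrable _ _), integral_add (hc₁.intervalIntegrable _ _)
          (hc₂.intervalIntegrable _ _), integral_div, integral_div, integral_div,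
          integral_const_mul]
    _ = _ := by rw [habs, hk0]; ring

/-- The Green function solution of `h'' + h = R` for `2π`-periodic data orthogonal
to sine and cosine. -/
theorem stmt_5 (R : ℝ → ℝ) (hRcont : Continuous R) (hRper : Function.Periodic R (2*π))
    (hRsin : ∫ t in (0:ℝ)..2*π, R t * Real.sin t = 0)
    (hRcos : ∫ t in (0:ℝ)..2*π, R t * Real.cos t = 0)
    (G : ℝ → ℝ) (hG : ∀ t, G t = (1/2) * (1 - |t|/π) * Real.sin |t|)
    (h : ℝ → ℝ) (hh : ∀ θ, h θ = ∫ t in (-π)..π, G t * R (θ + t)) :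
    Function.Periodic h (2*π) ∧
    (∀ θ, deriv (deriv h) θ + h θ = R θ) ∧
    (∫ t in (0:ℝ)..2*π, h t * Real.sin t = 0) ∧
    (∫ t in (0:ℝ)..2*π, h t * Real.cos t = 0) := by
  obtain rfl : G = greenKernel := funext hG
  have hrep : ∀ θ, h θ = sin θ * windowPrimitive (fun s => R s * cos s) θ -
      cos θ * windowPrimitive (fun s => R s * sin s) θ := fun θ => by
    rw [hh, sin_mul_windowPrimitive_sub_cos_mul_windowPrimitive hRcont,
      integral_greenKernel_mul_eq hRcont hRper hRsin hRcos]
  have horth := integral_comp_add_mul_sin_add_cos_eq_zero hRcont hRper hRsin hRcos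
  refine ⟨fun θ => ?_, variation_of_parameters
    (hasDerivAt_windowPrimitive (by fun_prop) fun x => by simp only [hRper x, cos_add_two_pi])
    (hasDerivAt_windowPrimitive (by fun_prop) fun x => by simp only [hRper x, sin_add_two_pi])
    hrep, ?_, ?_⟩
  · rw [hh, hh]
    exact integral_congr fun t _ => by rw [add_right_comm, hRper]
  · simp only [hh]
    exact integral_integral_comp_add_mul_eq_zero continuous_greenKernel hRcont continuous_sin
      fun s => by simpa using horth s 1 0
  · simp only [hh]
    exact integral_integral_comp_add_mul_eq_zero continuous_greenKernel hRcont continuous_cos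
      fun s => by simpa using horth s 0 1
end

section
/- Define δ(θ) = 1/(2 sin θ) + (sin θ)/2 − 1 and λ₀(θ) = (2/π)(π − 2θ − sin 2θ) for θ ∈ (0, π/2). Then θ is a critical point of θ ↦ δ(θ)/λ₀(θ)² if and only if 8 sin θ (1 − sin θ)² − cos θ (π − 2θ − sin 2θ) = 0. -/
/-!
Writing `s = sin θ`, `c = cos θ`, `G = π - 2θ - sin 2θ`, one has `δ = (1 - s)² / (2s)`,
`δ' = -c³ / (2s²)` and `G' = -2 - 2 cos 2θ = -4c²`. For a quotient `f / g²` with `g ≠ 0` the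
derivative vanishes exactly when `f' g - 2 f g' = 0`, and here
`f' g - 2 f g' = (2/π) · c² / (2s²) · (8 s (1 - s)² - c G)`, whose prefactor is nonzero on
`(0, π/2)`.
-/

open Real

theorem deriv_div_sq_eq_zero_iff {f g : ℝ → ℝ} {f' g' x : ℝ} (hf : HasDerivAt f f' x)
    (hg : HasDerivAt g g' x) (hgx : g x ≠ 0) :
    deriv (fun t => f t / g t ^ 2) x = 0 ↔ f' * g x - 2 * f x * g' = 0 := by
  have hquot := hf.fun_div (hg.fun_pow 2) (pow_ne_zero 2 hgx)
  rw [hquot.deriv, div_eq_zero_iff, or_iff_left (pow_ne_zero 2 (pow_ne_zero 2 hgx))]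
  have hfactor : f' * g x ^ 2 - f x * ((2 : ℕ) * g x ^ (2 - 1) * g') =
      g x * (f' * g x - 2 * f x * g') := by
    push_cast
    ring
  rw [hfactor, mul_eq_zero, or_iff_right hgx]

theorem hasDerivAt_inv_two_mul_sin_add_sin_div_two_sub_one {x : ℝ} (hx : sin x ≠ 0) :
    HasDerivAt (fun t => 1 / (2 * sin t) + sin t / 2 - 1) (-cos x ^ 3 / (2 * sin x ^ 2)) x := by
  refine ((((hasDerivAt_const x (1 : ℝ)).fun_div ((hasDerivAt_sin x).const_mul 2)
    (mul_ne_zero two_ne_zero hx)).fun_add ((hasDerivAt_sin x).div_const 2)).sub_const 1)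
    |>.congr_deriv ?_
  field_simp
  linear_combination cos x * sin_sq_add_cos_sq x

theorem hasDerivAt_pi_sub_two_mul_sub_sin_two_mul (x : ℝ) :
    HasDerivAt (fun t => π - 2 * t - sin (2 * t)) (-4 * cos x ^ 2) x := by
  have h2 : HasDerivAt (fun t : ℝ => 2 * t) 2 x := by
    simpa using (hasDerivAt_id x).const_mul 2
  refine (((hasDerivAt_const x π).fun_sub h2).fun_sub ((hasDerivAt_sin (2 * x)).comp x h2))
    |>.congr_deriv ?_
  rw [cos_two_mul]
  ring

theorem sin_two_mul_lt_pi_sub_two_mul {x : ℝ} (hx : x < π / 2) : sin (2 * x) < π - 2 * x := by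
  rw [← sin_pi_sub]
  exact sin_lt (by linarith)

/-- Criticality of `δ(θ)/λ₀(θ)²` for stadia is equivalent to the equation
`8 sin θ (1 - sin θ)² - cos θ (π - 2θ - sin 2θ) = 0`. -/
theorem stmt_17 (θ : ℝ) (hθ : θ ∈ Set.Ioo 0 (Real.pi/2)) :
    deriv (fun t : ℝ =>
        (1 / (2 * Real.sin t) + Real.sin t / 2 - 1) /
          ((2 / Real.pi) * (Real.pi - 2*t - Real.sin (2*t)))^2) θ = 0 ↔
      8 * Real.sin θ * (1 - Real.sin θ)^2
        - Real.cos θ * (Real.pi - 2*θ - Real.sin (2*θ)) = 0 := by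
  obtain ⟨hθ₀, hθ₁⟩ := hθ
  have hs : 0 < sin θ := sin_pos_of_pos_of_lt_pi hθ₀ (by linarith [pi_pos])
  have hc : 0 < cos θ := cos_pos_of_mem_Ioo ⟨by linarith [pi_pos], hθ₁⟩
  have hG : 0 < π - 2 * θ - sin (2 * θ) := by linarith [sin_two_mul_lt_pi_sub_two_mul hθ₁]
  rw [deriv_div_sq_eq_zero_iff (hasDerivAt_inv_two_mul_sin_add_sin_div_two_sub_one hs.ne')
    ((hasDerivAt_pi_sub_two_mul_sub_sin_two_mul θ).const_mul (2 / π)) (by positivity)]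
  have hfactor : -cos θ ^ 3 / (2 * sin θ ^ 2) * (2 / π * (π - 2 * θ - sin (2 * θ))) -
        2 * (1 / (2 * sin θ) + sin θ / 2 - 1) * (2 / π * (-4 * cos θ ^ 2)) =
      2 / π * cos θ ^ 2 / (2 * sin θ ^ 2) *
        (8 * sin θ * (1 - sin θ) ^ 2 - cos θ * (π - 2 * θ - sin (2 * θ))) := by
    field_simp
    ring
  rw [hfactor, mul_eq_zero, or_iff_right (by positivity)]
end

section
/- The equation 8 sin θ (1 − sin θ)² − cos θ (π − 2θ − sin 2θ) = 0 has a unique solution θ in the open interval (0, π/2). -/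
/-!
Because `(1 - sin θ)² = (1 - sin θ) cos² θ / (1 + sin θ)`, the left-hand side equals `cos θ · g θ`
with `g θ = 8 sin θ (1 - sin θ) cos θ / (1 + sin θ) - (π - 2θ - sin 2θ)`, and `cos θ > 0` on
`(0, π/2)`. In terms of `s = sin θ`, `g' = 4 (1 - s)(3 - 2s - 3s²) / (1 + s)`, so `g` increases up
to the angle `θ*` with `sin θ* = (√10 - 1)/3` and decreases after it. Since `g 0 = -π` and
`g (π/2) = 0`, `g` is positive on `[θ*, π/2)` and has exactly one zero, which lies in `(0, θ*)`.
-/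

open Real Set

theorem existsUnique_mem_Ioo_eq_zero_of_strictMonoOn_of_strictAntiOn {f : ℝ → ℝ} {a b c : ℝ}
    (hac : a < c) (hcb : c < b) (hcont : ContinuousOn f (Icc a c))
    (hmono : StrictMonoOn f (Icc a c)) (hanti : StrictAntiOn f (Icc c b))
    (ha : f a < 0) (hb : f b = 0) : ∃! x, x ∈ Ioo a b ∧ f x = 0 := by
  have hc : 0 < f c := hb ▸ hanti (left_mem_Icc.2 hcb.le) (right_mem_Icc.2 hcb.le) hcb
  obtain ⟨x, hx, hfx⟩ := intermediate_value_Ioo hac.le hcont ⟨ha, hc⟩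
  refine ⟨x, ⟨⟨hx.1, hx.2.trans hcb⟩, hfx⟩, fun y ⟨hy, hfy⟩ => ?_⟩
  rcases le_or_gt y c with hyc | hcy
  · exact hmono.injOn ⟨hy.1.le, hyc⟩ (Ioo_subset_Icc_self hx) (hfy.trans hfx.symm)
  · have := hanti ⟨hcy.le, hy.2.le⟩ (right_mem_Icc.2 hcb.le) hy.2
    linarith

noncomputable def reducedLhs (θ : ℝ) : ℝ :=
  8 * sin θ * (1 - sin θ) * cos θ / (1 + sin θ) - (π - 2 * θ - sin (2 * θ))

lemma cos_mul_reducedLhs {θ : ℝ} (h : 1 + sin θ ≠ 0) :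
    cos θ * reducedLhs θ = 8 * sin θ * (1 - sin θ) ^ 2 - cos θ * (π - 2 * θ - sin (2 * θ)) := by
  rw [reducedLhs]
  field_simp
  linear_combination 8 * sin θ * (1 - sin θ) * cos_sq' θ

lemma one_add_sin_pos {x : ℝ} (hx : x ∈ Icc 0 π) : 0 < 1 + sin x := by
  linarith [sin_nonneg_of_nonneg_of_le_pi hx.1 hx.2]

noncomputable def reducedLhsDeriv (s : ℝ) : ℝ :=
  4 * (1 - s) * (3 - 2 * s - 3 * s ^ 2) / (1 + s)

lemma hasDerivAt_reducedLhs {x : ℝ} (h : 1 + sin x ≠ 0) :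
    HasDerivAt reducedLhs (reducedLhsDeriv (sin x)) x := by
  have hsin2 : HasDerivAt (fun θ => sin (2 * θ)) (cos (2 * x) * 2) x := by
    simpa using ((hasDerivAt_id x).const_mul 2).sin
  have := ((((hasDerivAt_sin x).const_mul 8).mul ((hasDerivAt_sin x).const_sub 1)).mul
    (hasDerivAt_cos x)).div ((hasDerivAt_sin x).const_add 1) h |>.sub
    ((((hasDerivAt_id x).const_mul 2).const_sub π).sub hsin2)
  refine this.congr_deriv ?_
  simp only [reducedLhsDeriv, Pi.mul_apply, cos_two_mul]
  field_simp
  linear_combination (12 - 8 * sin x - 4 * sin x ^ 2) * sin_sq_add_cos_sq x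

lemma continuousOn_reducedLhs : ContinuousOn reducedLhs (Icc 0 (π / 2)) := fun x hx =>
  (hasDerivAt_reducedLhs (one_add_sin_pos ⟨hx.1, by linarith [pi_pos, hx.2]⟩).ne').continuousAt
    |>.continuousWithinAt

/-- The positive root of `3 - 2s - 3s²`, the factor of `reducedLhsDeriv` that changes sign. -/
noncomputable def critSin : ℝ := (√10 - 1) / 3

noncomputable def critAngle : ℝ := arcsin critSin

lemma three_sub_two_mul_sub_three_mul_sq (s : ℝ) :
    3 - 2 * s - 3 * s ^ 2 = 3 * (critSin - s) * (s + (1 + √10) / 3) := by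
  rw [critSin]
  linear_combination (-1 / 3 : ℝ) * sq_sqrt (show (0 : ℝ) ≤ 10 by norm_num)

lemma critSin_pos : 0 < critSin := by
  rw [critSin, div_pos_iff_of_pos_right three_pos, sub_pos, lt_sqrt zero_le_one]
  norm_num

lemma critSin_lt_one : critSin < 1 := by
  rw [critSin, div_lt_one three_pos, sub_lt_iff_lt_add, sqrt_lt' (by norm_num)]
  norm_num

lemma reducedLhsDeriv_pos {s : ℝ} (h0 : 0 ≤ s) (hs : s < critSin) : 0 < reducedLhsDeriv s := by
  have h1 : 0 < 1 - s := by linarith [critSin_lt_one]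
  have h2 : 0 < critSin - s := by linarith
  rw [reducedLhsDeriv, three_sub_two_mul_sub_three_mul_sq]
  positivity

lemma reducedLhsDeriv_neg {s : ℝ} (hs : critSin < s) (h1 : s < 1) : reducedLhsDeriv s < 0 := by
  have h0 : 0 < s := critSin_pos.trans hs
  rw [reducedLhsDeriv, three_sub_two_mul_sub_three_mul_sq]
  refine div_neg_of_neg_of_pos (mul_neg_of_pos_of_neg (by linarith) ?_) (by linarith)
  exact mul_neg_of_neg_of_pos (by linarith) (by positivity)

lemma critAngle_pos : 0 < critAngle := arcsin_pos.2 critSin_pos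

lemma critAngle_lt_pi_div_two : critAngle < π / 2 := arcsin_lt_pi_div_two.2 critSin_lt_one

lemma strictMonoOn_reducedLhs : StrictMonoOn reducedLhs (Icc 0 critAngle) := by
  refine strictMonoOn_of_hasDerivWithinAt_pos (convex_Icc _ _)
    (f' := fun x => reducedLhsDeriv (sin x))
    (continuousOn_reducedLhs.mono (Icc_subset_Icc_right critAngle_lt_pi_div_two.le))
    (fun x hx => ?_) fun x hx => ?_ <;> rw [interior_Icc] at hx
  · have hx' : x ∈ Icc 0 π := ⟨hx.1.le, by linarith [pi_pos, critAngle_lt_pi_div_two, hx.2]⟩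
    exact (hasDerivAt_reducedLhs (one_add_sin_pos hx').ne').hasDerivWithinAt
  · have hx' : x ∈ Ico (-(π / 2)) (π / 2) :=
      ⟨by linarith [pi_pos, hx.1], hx.2.trans critAngle_lt_pi_div_two⟩
    exact reducedLhsDeriv_pos (sin_nonneg_of_nonneg_of_le_pi hx.1.le (by linarith [hx'.2, pi_pos]))
      ((lt_arcsin_iff_sin_lt' hx').1 hx.2)

lemma strictAntiOn_reducedLhs : StrictAntiOn reducedLhs (Icc critAngle (π / 2)) := by
  refine strictAntiOn_of_hasDerivWithinAt_neg (convex_Icc _ _)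
    (f' := fun x => reducedLhsDeriv (sin x))
    (continuousOn_reducedLhs.mono (Icc_subset_Icc_left critAngle_pos.le))
    (fun x hx => ?_) fun x hx => ?_ <;> rw [interior_Icc] at hx
  · have hx' : x ∈ Icc 0 π := ⟨(critAngle_pos.trans hx.1).le, by linarith [pi_pos, hx.2]⟩
    exact (hasDerivAt_reducedLhs (one_add_sin_pos hx').ne').hasDerivWithinAt
  · have hx' : x ∈ Ioc (-(π / 2)) (π / 2) := ⟨by linarith [pi_pos, critAngle_pos, hx.1], hx.2.le⟩
    have hsin1 : sin x < 1 := by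
      rw [← lt_arcsin_iff_sin_lt' ⟨hx'.1.le, hx.2⟩, arcsin_one]
      exact hx.2
    exact reducedLhsDeriv_neg ((arcsin_lt_iff_lt_sin' hx').1 hx.1) hsin1

lemma reducedLhs_zero : reducedLhs 0 = -π := by
  simp [reducedLhs]

lemma reducedLhs_pi_div_two : reducedLhs (π / 2) = 0 := by
  simp [reducedLhs, mul_div_cancel₀ π two_ne_zero]

/-- The equation `8 sin θ (1 - sin θ)² - cos θ (π - 2θ - sin 2θ) = 0` has a unique
solution in `(0, π/2)`. -/
theorem stmt_18 :
    ∃! θ : ℝ, θ ∈ Set.Ioo 0 (Real.pi/2) ∧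
      8 * Real.sin θ * (1 - Real.sin θ)^2
        - Real.cos θ * (Real.pi - 2*θ - Real.sin (2*θ)) = 0 := by
  have hzero_iff : ∀ θ, θ ∈ Ioo 0 (π / 2) ∧ reducedLhs θ = 0 ↔ θ ∈ Ioo 0 (π / 2) ∧
      8 * sin θ * (1 - sin θ) ^ 2 - cos θ * (π - 2 * θ - sin (2 * θ)) = 0 := fun θ =>
    and_congr_right fun hθ => by
      have hcos : 0 < cos θ := cos_pos_of_mem_Ioo ⟨by linarith [pi_pos, hθ.1], hθ.2⟩
      rw [← cos_mul_reducedLhs (one_add_sin_pos ⟨hθ.1.le, by linarith [pi_pos, hθ.2]⟩).ne',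
        mul_eq_zero, or_iff_right hcos.ne']
  exact (existsUnique_congr hzero_iff).1 <| existsUnique_mem_Ioo_eq_zero_of_strictMonoOn_of_strictAntiOn critAngle_pos
    critAngle_lt_pi_div_two (continuousOn_reducedLhs.mono
      (Icc_subset_Icc_right critAngle_lt_pi_div_two.le)) strictMonoOn_reducedLhs
    strictAntiOn_reducedLhs (by rw [reducedLhs_zero]; linarith [pi_pos]) reducedLhs_pi_div_two
end
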